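/- arXiv:2306.11110 — 8 statements merged into one kernel-verified Lean document; each statement's English description precedes it below -/
import Mathlib

section
/- For every ρ > 0 and every z ∈ ℝ, the generating function U(ρ,z) = A·log(ρ²) + Σ_{i=1}^r a_i·(2·d_i − (z − z_i)·log((d_i + z − z_i)/(d_i − z + z_i))) satisfies the first–derivative formulas ∂U/∂ρ (ρ,z) = (2/ρ)·(A + Σ_{i=1}^r a_i·d_i) and ∂U/∂z (ρ,z) = −Σ_{i=1}^r a_i·log((d_i + z − z_i)/(d_i − z + z_i)). (Here the partial derivatives are the derivatives of the one-variable functions ρ ↦ U(ρ,z) and z ↦ U(ρ,z).) -/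
open Finset

/-- The distance `d_i(ρ,z) = (ρ² + (z − z_i)²)^{1/2}`. -/
noncomputable def dd {r : ℕ} (zs : Fin r → ℝ) (ρ z : ℝ) (i : Fin r) : ℝ :=
  Real.sqrt (ρ ^ 2 + (z - zs i) ^ 2)

/-- The generating function `U(ρ,z)`. -/
noncomputable def genU {r : ℕ} (A : ℝ) (a zs : Fin r → ℝ) (ρ z : ℝ) : ℝ :=
  A * Real.log (ρ ^ 2) +
    ∑ i, a i * (2 * dd zs ρ z i -
      (z - zs i) * Real.log ((dd zs ρ z i + z - zs i) / (dd zs ρ z i - z + zs i)))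

/-!
Each summand of `U` is `aᵢ` times the same function `2d − w log ((d + w)/(d − w))` of `ρ` and
`w = z − zᵢ`, with `d = √(ρ² + w²)`. Since `(d + w)(d − w) = ρ²`, the derivative of the logarithm
is `−2w/(ρd)` in `ρ` and `2/d` in `w`, which gives `2d/ρ` and `−log ((d + w)/(d − w))`.
-/

open Real

theorem abs_lt_sqrt_sq_add_sq {ρ : ℝ} (w : ℝ) (hρ : ρ ≠ 0) : |w| < √(ρ ^ 2 + w ^ 2) := by
  rw [← sqrt_sq_eq_abs]
  exact sqrt_lt_sqrt (sq_nonneg w) (lt_add_of_pos_left _ (by positivity))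

theorem HasDerivAt.log_div_add_sub {f g : ℝ → ℝ} {f' g' x : ℝ} (hf : HasDerivAt f f' x)
    (hg : HasDerivAt g g' x) (hadd : 0 < f x + g x) (hsub : 0 < f x - g x) :
    HasDerivAt (fun t => Real.log ((f t + g t) / (f t - g t)))
      (2 * (f x * g' - f' * g x) / (f x ^ 2 - g x ^ 2)) x := by
  refine (((hf.add hg).div (hf.sub hg) hsub.ne').log (div_pos hadd hsub).ne').congr_deriv ?_
  have : f x ^ 2 - g x ^ 2 = (f x + g x) * (f x - g x) := by ring
  simp only [Pi.add_apply, Pi.sub_apply, Pi.div_apply, this]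
  field_simp
  ring

noncomputable def rodPotential (ρ w : ℝ) : ℝ :=
  2 * √(ρ ^ 2 + w ^ 2) - w * log ((√(ρ ^ 2 + w ^ 2) + w) / (√(ρ ^ 2 + w ^ 2) - w))

section rodPotential

variable {ρ : ℝ} (w : ℝ)

theorem hasDerivAt_rodPotential_fst (hρ : ρ ≠ 0) :
    HasDerivAt (fun t => rodPotential t w) (2 * √(ρ ^ 2 + w ^ 2) / ρ) ρ := by
  have hpos : 0 < ρ ^ 2 + w ^ 2 := by positivity
  obtain ⟨hneg, hlt⟩ := abs_lt.1 (abs_lt_sqrt_sq_add_sq w hρ)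
  have hd : HasDerivAt (fun t => √(t ^ 2 + w ^ 2)) (2 * ρ / (2 * √(ρ ^ 2 + w ^ 2))) ρ := by
    simpa using ((hasDerivAt_pow 2 ρ).add_const (w ^ 2)).sqrt hpos.ne'
  have hlog := hd.log_div_add_sub (hasDerivAt_const ρ w) (by linarith) (by linarith)
  refine ((hd.const_mul 2).sub (hlog.const_mul w)).congr_deriv ?_
  field_simp
  rw [sq_sqrt hpos.le]
  ring

theorem hasDerivAt_rodPotential_snd (hρ : ρ ≠ 0) :
    HasDerivAt (rodPotential ρ) (-log ((√(ρ ^ 2 + w ^ 2) + w) / (√(ρ ^ 2 + w ^ 2) - w))) w := by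
  have hpos : 0 < ρ ^ 2 + w ^ 2 := by positivity
  obtain ⟨hneg, hlt⟩ := abs_lt.1 (abs_lt_sqrt_sq_add_sq w hρ)
  have hd : HasDerivAt (fun t => √(ρ ^ 2 + t ^ 2)) (2 * w / (2 * √(ρ ^ 2 + w ^ 2))) w := by
    simpa using ((hasDerivAt_pow 2 w).const_add (ρ ^ 2)).sqrt hpos.ne'
  have hlog := hd.log_div_add_sub (hasDerivAt_id' w) (by linarith) (by linarith)
  refine ((hd.const_mul 2).sub ((hasDerivAt_id' w).mul hlog)).congr_deriv ?_
  field_simp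
  ring

end rodPotential

theorem genU_eq_rodPotential {r : ℕ} (A : ℝ) (a zs : Fin r → ℝ) (ρ z : ℝ) :
    genU A a zs ρ z = A * log (ρ ^ 2) + ∑ i, a i * rodPotential ρ (z - zs i) := by
  simp only [genU, dd, rodPotential, add_sub_assoc, sub_add]

theorem statement0_general {r : ℕ} (A : ℝ)
    (zs a : Fin r → ℝ)
    (ρ z : ℝ) (hρ : 0 < ρ) :
    HasDerivAt (fun t => genU A a zs t z)
      ((2 / ρ) * (A + ∑ i, a i * dd zs ρ z i)) ρ ∧
    HasDerivAt (fun t => genU A a zs ρ t)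
      (-∑ i, a i * Real.log ((dd zs ρ z i + z - zs i) / (dd zs ρ z i - z + zs i))) z := by
  simp only [genU_eq_rodPotential, dd, add_sub_assoc, sub_add]
  constructor
  · have hlog : HasDerivAt (fun t => A * log (t ^ 2)) (A * (2 / ρ)) ρ := by
      refine (((hasDerivAt_pow 2 ρ).log (by positivity)).const_mul A).congr_deriv ?_
      field_simp
      norm_num
      ring
    have hrods := HasDerivAt.fun_sum (u := Finset.univ) fun i _ =>
      (hasDerivAt_rodPotential_fst (z - zs i) hρ.ne').const_mul (a i)
    refine (hlog.add hrods).congr_deriv ?_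
    rw [mul_add, Finset.mul_sum]
    congr 1
    · ring
    · exact Finset.sum_congr rfl fun i _ => by ring
  · have hrods := HasDerivAt.fun_sum (u := Finset.univ) fun i _ =>
      ((hasDerivAt_rodPotential_snd (z - zs i) hρ.ne').comp_sub_const z (zs i)).const_mul (a i)
    refine ((hasDerivAt_const z _).add hrods).congr_deriv ?_
    simp

theorem statement0 {r : ℕ} (hr : 1 ≤ r) (A : ℝ) (hA : 0 < A)
    (zs a : Fin r → ℝ)
    (hz : ∀ i j : Fin r, i < j → zs i < zs j)
    (ha : ∀ i, 0 < a i) (hsum : ∑ i, a i = 1)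
    (ρ z : ℝ) (hρ : 0 < ρ) :
    HasDerivAt (fun t => genU A a zs t z)
      ((2 / ρ) * (A + ∑ i, a i * dd zs ρ z i)) ρ ∧
    HasDerivAt (fun t => genU A a zs ρ t)
      (-∑ i, a i * Real.log ((dd zs ρ z i + z - zs i) / (dd zs ρ z i - z + zs i))) z :=
  statement0_general A zs a ρ z hρ
end

section
/- For every ρ > 0 and every z ∈ ℝ, the function V(ρ,z) = (1/A)·(A + Σ_{i=1}^r a_i·d_i)·( (Σ a_i/d_i)·(A + Σ a_i·d_i) / ( (Σ a_i·(z − z_i)/d_i)² + (Σ a_i·ρ/d_i)² ) − 1 ) satisfies the lower bound V(ρ,z) ≥ 1 + A·Σ_{i=1}^r a_i/d_i; in particular V(ρ,z) > 1. -/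
/-!
Write `S = Σ aᵢ dᵢ`, `T = Σ aᵢ / dᵢ` and `D = X² + Y²` for the denominator of `V`. The point
`(X, Y)` is a convex combination of the unit vectors `((z − zᵢ) / dᵢ, ρ / dᵢ)`, so `0 < D ≤ 1`,
and Cauchy–Schwarz gives `S T ≥ 1`. Hence `V ≥ (A + S)(T (A + S) − 1) / A`, which exceeds
`1 + A T` by `(S T − 1)(2A + S) / A ≥ 0`.
-/

open Finset

/-- The function `V(ρ,z)` of the Harmark form of the metric. -/
noncomputable def Vfun {r : ℕ} (A : ℝ) (a zs : Fin r → ℝ) (ρ z : ℝ) : ℝ :=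
  (1 / A) * (A + ∑ i, a i * dd zs ρ z i) *
    ((∑ i, a i / dd zs ρ z i) * (A + ∑ i, a i * dd zs ρ z i) /
      ((∑ i, a i * (z - zs i) / dd zs ρ z i) ^ 2 +
        (∑ i, a i * ρ / dd zs ρ z i) ^ 2) - 1)

theorem sq_sum_mul_add_sq_sum_mul_le {ι : Type*} (s : Finset ι) (w u v : ι → ℝ)
    (hw : ∀ i ∈ s, 0 ≤ w i) (huv : ∀ i ∈ s, u i ^ 2 + v i ^ 2 = 1) :
    (∑ i ∈ s, w i * u i) ^ 2 + (∑ i ∈ s, w i * v i) ^ 2 ≤ (∑ i ∈ s, w i) ^ 2 := by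
  set c : ℂ := ∑ i ∈ s, (w i : ℂ) * ⟨u i, v i⟩
  have hnorm : ‖c‖ ≤ ∑ i ∈ s, w i := by
    refine (norm_sum_le _ _).trans (sum_le_sum fun i hi => ?_)
    rw [norm_mul, Complex.norm_real, Real.norm_of_nonneg (hw i hi), Complex.norm_def,
      Complex.normSq_mk, ← sq, ← sq, huv i hi, Real.sqrt_one, mul_one]
  have hc : ‖c‖ ^ 2 = (∑ i ∈ s, w i * u i) ^ 2 + (∑ i ∈ s, w i * v i) ^ 2 := by
    rw [Complex.sq_norm, Complex.normSq_apply, Complex.re_sum, Complex.im_sum, sq, sq]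
    simp
  rw [← hc]
  exact pow_le_pow_left₀ (norm_nonneg c) hnorm 2

theorem sq_sum_le_sum_mul_mul_sum_div {ι : Type*} (s : Finset ι) (a d : ι → ℝ)
    (ha : ∀ i ∈ s, 0 ≤ a i) (hd : ∀ i ∈ s, 0 < d i) :
    (∑ i ∈ s, a i) ^ 2 ≤ (∑ i ∈ s, a i * d i) * ∑ i ∈ s, a i / d i :=
  sum_sq_le_sum_mul_sum_of_sq_le_mul s
    (fun i hi => mul_nonneg (ha i hi) (hd i hi).le)
    (fun i hi => div_nonneg (ha i hi) (hd i hi).le)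
    (fun i hi => le_of_eq (by field_simp [(hd i hi).ne']))

theorem one_add_mul_le_of_le_one {A S T D : ℝ} (hA : 0 < A) (hS : 0 < S) (hT : 0 < T)
    (hD : 0 < D) (hD1 : D ≤ 1) (hST : 1 ≤ S * T) :
    1 + A * T ≤ 1 / A * (A + S) * (T * (A + S) / D - 1) := by
  have hAS : 0 < A + S := by linarith
  have hdiv : T * (A + S) ≤ T * (A + S) / D := le_div_self (by positivity) hD hD1
  calc 1 + A * T
      ≤ 1 / A * (A + S) * (T * (A + S) - 1) := by
        rw [div_mul_eq_mul_div, div_mul_eq_mul_div, le_div_iff₀ hA]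
        nlinarith [mul_nonneg (sub_nonneg.2 hST) (by linarith : (0 : ℝ) ≤ 2 * A + S)]
    _ ≤ 1 / A * (A + S) * (T * (A + S) / D - 1) := by gcongr

theorem dd_pos {r : ℕ} (zs : Fin r → ℝ) {ρ : ℝ} (hρ : 0 < ρ) (z : ℝ) (i : Fin r) :
    0 < dd zs ρ z i :=
  Real.sqrt_pos.2 (by positivity)

theorem sq_div_dd_add_sq_div_dd {r : ℕ} (zs : Fin r → ℝ) {ρ : ℝ} (hρ : 0 < ρ) (z : ℝ)
    (i : Fin r) : ((z - zs i) / dd zs ρ z i) ^ 2 + (ρ / dd zs ρ z i) ^ 2 = 1 := by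
  have hd := dd_pos zs hρ z i
  rw [div_pow, div_pow, ← add_div, div_eq_one_iff_eq (by positivity), dd,
    Real.sq_sqrt (by positivity), add_comm]

theorem statement5_general {r : ℕ} (A : ℝ) (hA : 0 < A)
    (zs a : Fin r → ℝ)
    (ha : ∀ i, 0 < a i) (hsum : ∑ i, a i = 1)
    (ρ z : ℝ) (hρ : 0 < ρ) :
    1 + A * ∑ i, a i / dd zs ρ z i ≤ Vfun A a zs ρ z ∧ 1 < Vfun A a zs ρ z := by
  have hne : (univ : Finset (Fin r)).Nonempty :=
    nonempty_of_sum_ne_zero (hsum ▸ one_ne_zero)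
  have hd := dd_pos zs hρ z
  have hT : 0 < ∑ i, a i / dd zs ρ z i := sum_pos (fun i _ => div_pos (ha i) (hd i)) hne
  have hY : 0 < ∑ i, a i * ρ / dd zs ρ z i :=
    sum_pos (fun i _ => div_pos (mul_pos (ha i) hρ) (hd i)) hne
  have hD1 : (∑ i, a i * (z - zs i) / dd zs ρ z i) ^ 2 +
      (∑ i, a i * ρ / dd zs ρ z i) ^ 2 ≤ 1 := by
    simpa only [mul_div_assoc, hsum, one_pow] using
      sq_sum_mul_add_sq_sum_mul_le univ a _ _ (fun i _ => (ha i).le)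
        (fun i _ => sq_div_dd_add_sq_div_dd zs hρ z i)
  have hST : 1 ≤ (∑ i, a i * dd zs ρ z i) * ∑ i, a i / dd zs ρ z i := by
    simpa only [hsum, one_pow] using
      sq_sum_le_sum_mul_mul_sum_div univ a _ (fun i _ => (ha i).le) (fun i _ => hd i)
  have hV : 1 + A * ∑ i, a i / dd zs ρ z i ≤ Vfun A a zs ρ z :=
    one_add_mul_le_of_le_one hA (sum_pos (fun i _ => mul_pos (ha i) (hd i)) hne) hT
      (by positivity) hD1 hST
  exact ⟨hV, by nlinarith [mul_pos hA hT]⟩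

theorem statement5 {r : ℕ} (hr : 1 ≤ r) (A : ℝ) (hA : 0 < A)
    (zs a : Fin r → ℝ)
    (hz : ∀ i j : Fin r, i < j → zs i < zs j)
    (ha : ∀ i, 0 < a i) (hsum : ∑ i, a i = 1)
    (ρ z : ℝ) (hρ : 0 < ρ) :
    1 + A * ∑ i, a i / dd zs ρ z i ≤ Vfun A a zs ρ z ∧ 1 < Vfun A a zs ρ z :=
  statement5_general A hA zs a ha hsum ρ z hρ
end

section
/- The function V tends to 1 at infinity: for every ε > 0 there exists R > 0 such that for all ρ > 0 and z ∈ ℝ with ρ² + z² > R², one has |V(ρ,z) − 1| < ε, where V(ρ,z) = (1/A)·(A + Σ_{i=1}^r a_i·d_i)·( (Σ a_i/d_i)·(A + Σ a_i·d_i) / ( (Σ a_i·(z − z_i)/d_i)² + (Σ a_i·ρ/d_i)² ) − 1 ). -/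
open Finset

lemma double_sum_PS {r : ℕ} (a d : Fin r → ℝ) (hd : ∀ i, 0 < d i) :
    2 * ((∑ i, a i / d i) * (∑ i, a i * d i) - (∑ i, a i) ^ 2)
      = ∑ i, ∑ j, a i * a j * (d i - d j) ^ 2 / (d i * d j) := by
  rw [sq, Finset.sum_mul_sum, Finset.sum_mul_sum]
  have hswap : ∑ i : Fin r, ∑ j : Fin r, (a i / d i) * (a j * d j)
      = ∑ i : Fin r, ∑ j : Fin r, (a j / d j) * (a i * d i) := Finset.sum_comm
  rw [two_mul]
  nth_rewrite 2 [hswap]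
  rw [show ∀ P P' Q : ℝ, (P - Q) + (P' - Q) = (P + P') - (Q + Q) by intros; ring]
  rw [← Finset.sum_add_distrib, ← Finset.sum_add_distrib, ← Finset.sum_sub_distrib]
  refine Finset.sum_congr rfl fun i _ => ?_
  rw [← Finset.sum_add_distrib, ← Finset.sum_add_distrib, ← Finset.sum_sub_distrib]
  refine Finset.sum_congr rfl fun j _ => ?_
  have h1 := (hd i).ne'
  have h2 := (hd j).ne'
  field_simp
  ring

lemma double_sum_D {r : ℕ} (a x y : Fin r → ℝ) (hxy : ∀ i, x i ^ 2 + y i ^ 2 = 1) :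
    2 * ((∑ i, a i) ^ 2 - ((∑ i, a i * x i) ^ 2 + (∑ i, a i * y i) ^ 2))
      = ∑ i, ∑ j, a i * a j * ((x i - x j) ^ 2 + (y i - y j) ^ 2) := by
  simp only [sq, Finset.sum_mul_sum]
  rw [show ∀ P Q T : ℝ, 2 * (P - (Q + T)) = (P + P) - (Q + Q) - (T + T) by intros; ring]
  rw [← Finset.sum_add_distrib, ← Finset.sum_add_distrib, ← Finset.sum_add_distrib,
    ← Finset.sum_sub_distrib, ← Finset.sum_sub_distrib]
  refine Finset.sum_congr rfl fun i _ => ?_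
  rw [← Finset.sum_add_distrib, ← Finset.sum_add_distrib, ← Finset.sum_add_distrib,
    ← Finset.sum_sub_distrib, ← Finset.sum_sub_distrib]
  refine Finset.sum_congr rfl fun j _ => ?_
  linear_combination (-(a i * a j)) * hxy i + (-(a i * a j)) * hxy j

lemma const_double_sum {r : ℕ} (a : Fin r → ℝ) (hsum : ∑ i, a i = 1) (c : ℝ) :
    ∑ i : Fin r, ∑ j : Fin r, a i * a j * c = c := by
  have h11 : ∑ i : Fin r, ∑ j : Fin r, a i * a j = 1 := by
    rw [← Finset.sum_mul_sum, hsum, one_mul]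
  calc ∑ i : Fin r, ∑ j : Fin r, a i * a j * c
      = (∑ i : Fin r, ∑ j : Fin r, a i * a j) * c := by
        rw [Finset.sum_mul]
        exact Finset.sum_congr rfl fun i _ => by rw [Finset.sum_mul]
    _ = c := by rw [h11, one_mul]

lemma dd_bounds {r : ℕ} (zs : Fin r → ℝ) (M ρ z t : ℝ) (hMi : ∀ i, |zs i| ≤ M)
    (ht2 : t ^ 2 = ρ ^ 2 + z ^ 2) (ht0 : 0 ≤ t) (htM : M ≤ t) (i : Fin r) :
    t - M ≤ dd zs ρ z i ∧ dd zs ρ z i ≤ t + M := by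
  have hz1 : z ≤ t := by nlinarith [sq_nonneg ρ]
  have hz2 : -t ≤ z := by nlinarith [sq_nonneg ρ]
  have hw := abs_le.mp (hMi i)
  constructor
  · rw [show t - M = Real.sqrt ((t - M) ^ 2) by rw [Real.sqrt_sq (by linarith)]]
    apply Real.sqrt_le_sqrt
    rcases le_total 0 (zs i) with hs | hs
    · nlinarith [mul_nonneg (show (0:ℝ) ≤ M - zs i by linarith [hw.2])
          (show (0:ℝ) ≤ 2 * t - M - zs i by linarith [hw.2]),
        mul_nonneg hs (show (0:ℝ) ≤ t - z by linarith)]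
    · nlinarith [mul_nonneg (show (0:ℝ) ≤ M + zs i by linarith [hw.1])
          (show (0:ℝ) ≤ 2 * t - M + zs i by linarith [hw.1]),
        mul_nonneg (neg_nonneg.2 hs) (show (0:ℝ) ≤ t + z by linarith)]
  · rw [show t + M = Real.sqrt ((t + M) ^ 2) by rw [Real.sqrt_sq (by linarith)]]
    apply Real.sqrt_le_sqrt
    nlinarith [mul_nonneg (show (0:ℝ) ≤ t - z by linarith) (show (0:ℝ) ≤ M - zs i by linarith [hw.2]),
      mul_nonneg (show (0:ℝ) ≤ t + z by linarith) (show (0:ℝ) ≤ M + zs i by linarith [hw.1])]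

lemma unit_xy (ρ zz d : ℝ) (hd : 0 < d) (hsq : d ^ 2 = ρ ^ 2 + zz ^ 2) :
    (zz / d) ^ 2 + (ρ / d) ^ 2 = 1 := by
  field_simp
  linarith

lemma sq_add_le_of_sq_le {a b c : ℝ} (hc : 0 ≤ c) (h1 : a ^ 2 ≤ c) (h2 : b ^ 2 ≤ c) :
    (a + b) ^ 2 ≤ 4 * c := by nlinarith [sq_nonneg (a - b)]

lemma final_step {Num u A ε D C₁ : ℝ} (hA : 0 < A) (hε : 0 < ε) (hu0 : 0 < u)
    (hNum0 : 0 ≤ Num) (hNumU : Num * u ≤ C₁) (h2C : 2 * C₁ < u * (A * ε))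
    (hD2 : (1 : ℝ) / 2 ≤ D) : Num < ε * (A * D) := by
  have hkey : 0 ≤ ε * A * u * (D - 1 / 2) :=
    mul_nonneg (by positivity) (by linarith)
  nlinarith [hNumU, h2C, hkey, hu0, hNum0]

set_option maxHeartbeats 2000000 in
theorem statement7 {r : ℕ} (hr : 1 ≤ r) (A : ℝ) (hA : 0 < A)
    (zs a : Fin r → ℝ)
    (hz : ∀ i j : Fin r, i < j → zs i < zs j)
    (ha : ∀ i, 0 < a i) (hsum : ∑ i, a i = 1) :
    ∀ ε > 0, ∃ R > 0, ∀ ρ z : ℝ, 0 < ρ → R ^ 2 < ρ ^ 2 + z ^ 2 →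
      |Vfun A a zs ρ z - 1| < ε := by
  intro ε hε
  haveI : Nonempty (Fin r) := ⟨⟨0, hr⟩⟩
  obtain ⟨M0, hM0i⟩ := Finite.exists_le (fun i : Fin r => |zs i|)
  set M := max M0 0 with hMdef
  have hMi : ∀ i, |zs i| ≤ M := fun i => le_trans (hM0i i) (le_max_left _ _)
  have hM0 : 0 ≤ M := le_max_right _ _
  set C₁ : ℝ := A ^ 2 + 42 * A * M ^ 2 + 126 * M ^ 2 with hC₁def
  have hC₁ : 0 < C₁ := by positivity
  have hdiv : 0 ≤ 2 * C₁ / (A * ε) := by positivity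
  have hR0 : 0 < 1 + A + 11 * M + 2 * C₁ / (A * ε) := by linarith
  refine ⟨1 + A + 11 * M + 2 * C₁ / (A * ε), hR0, ?_⟩
  intro ρ z hρ hRz
  obtain ⟨t, ht2, ht0⟩ : ∃ t : ℝ, t ^ 2 = ρ ^ 2 + z ^ 2 ∧ 0 ≤ t :=
    ⟨Real.sqrt (ρ ^ 2 + z ^ 2), Real.sq_sqrt (by positivity), Real.sqrt_nonneg _⟩
  have htR : 1 + A + 11 * M + 2 * C₁ / (A * ε) < t :=
    lt_of_pow_lt_pow_left₀ 2 ht0 (by rw [ht2]; exact hRz)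
  set u := t - M with hudef
  have huR : 1 + A + 10 * M + 2 * C₁ / (A * ε) < u := by
    simp only [hudef]; linarith
  have hu1 : 1 ≤ u := by linarith
  have hu0 : 0 < u := by linarith
  have huA : A ≤ u := by linarith
  have huM : 10 * M ≤ u := by linarith
  have huC : 2 * C₁ / (A * ε) < u := by linarith
  have htM : M ≤ t := by simp only [hudef] at hu0; linarith
  have htu : t = u + M := by simp only [hudef]; ring
  have hρ2u : ρ ≤ 2 * u := by
    have h1 : ρ ^ 2 ≤ t ^ 2 := by rw [ht2]; linarith [sq_nonneg z]
    have h2 : ρ ≤ t := le_of_pow_le_pow_left₀ (by norm_num) ht0 h1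
    linarith
  -- bounds on the distances
  have hd : ∀ i, u ≤ dd zs ρ z i ∧ dd zs ρ z i ≤ t + M := by
    intro i
    obtain ⟨h1, h2⟩ := dd_bounds zs M ρ z t hMi ht2 ht0 htM i
    exact ⟨by rw [hudef]; exact h1, h2⟩
  have hd0 : ∀ i, 0 < dd zs ρ z i := fun i => lt_of_lt_of_le hu0 (hd i).1
  have hd2u : ∀ i, dd zs ρ z i ≤ 2 * u := fun i => by linarith [(hd i).2]
  have hdsq : ∀ i, (dd zs ρ z i) ^ 2 = ρ ^ 2 + (z - zs i) ^ 2 := fun i =>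
    Real.sq_sqrt (by positivity)
  -- abbreviations
  set S := ∑ i, a i * dd zs ρ z i with hSdef
  set P := ∑ i, a i / dd zs ρ z i with hPdef
  set X := ∑ i, a i * (z - zs i) / dd zs ρ z i with hXdef
  set Y := ∑ i, a i * ρ / dd zs ρ z i with hYdef
  set D := X ^ 2 + Y ^ 2 with hDdef
  have hVeq : Vfun A a zs ρ z = (1 / A) * (A + S) * (P * (A + S) / D - 1) := rfl
  -- bounds on S and P
  have hS1 : u ≤ S := by
    calc u = ∑ i, a i * u := by rw [← Finset.sum_mul, hsum, one_mul]
    _ ≤ S := Finset.sum_le_sum fun i _ => mul_le_mul_of_nonneg_left (hd i).1 (ha i).le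
  have hS2 : S ≤ t + M := by
    calc S ≤ ∑ i, a i * (t + M) := Finset.sum_le_sum fun i _ =>
          mul_le_mul_of_nonneg_left (hd i).2 (ha i).le
    _ = t + M := by rw [← Finset.sum_mul, hsum, one_mul]
  have hP0 : 0 < P := Finset.sum_pos (fun i _ => div_pos (ha i) (hd0 i)) univ_nonempty
  have hPu : P ≤ 1 / u := by
    calc P ≤ ∑ i, a i / u := Finset.sum_le_sum fun i _ =>
          div_le_div_of_nonneg_left (ha i).le hu0 (hd i).1
    _ = 1 / u := by rw [← Finset.sum_div, hsum]
  -- difference of distances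
  have hdd : ∀ i j, (dd zs ρ z i - dd zs ρ z j) ^ 2 ≤ 4 * M ^ 2 := by
    intro i j
    calc (dd zs ρ z i - dd zs ρ z j) ^ 2 ≤ (2 * M) ^ 2 :=
          sq_le_sq' (by linarith [(hd i).1, (hd j).2, htu]) (by linarith [(hd i).2, (hd j).1, htu])
      _ = 4 * M ^ 2 := by ring
  have hden1 : ∀ i j, u ^ 2 ≤ dd zs ρ z i * dd zs ρ z j := by
    intro i j
    calc u ^ 2 = u * u := sq u
      _ ≤ dd zs ρ z i * dd zs ρ z j := mul_le_mul (hd i).1 (hd j).1 hu0.le (hd0 i).le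
  have hden : ∀ i j, u ^ 2 * u ^ 2 ≤ (dd zs ρ z i * dd zs ρ z j) ^ 2 := by
    intro i j
    have h1 : u * u ≤ dd zs ρ z i * dd zs ρ z j :=
      mul_le_mul (hd i).1 (hd j).1 hu0.le (hd0 i).le
    calc u ^ 2 * u ^ 2 = (u * u) ^ 2 := by ring
      _ ≤ (dd zs ρ z i * dd zs ρ z j) ^ 2 := pow_le_pow_left₀ (by positivity) h1 2
  -- bound on e₁ = P * S - 1
  have he1 : 0 ≤ P * S - 1 ∧ P * S - 1 ≤ 2 * M ^ 2 / u ^ 2 := by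
    have hid := double_sum_PS a (fun i => dd zs ρ z i) hd0
    rw [hsum, one_pow] at hid
    rw [← hPdef, ← hSdef] at hid
    have hnn : (0:ℝ) ≤ ∑ i : Fin r, ∑ j : Fin r,
        a i * a j * (dd zs ρ z i - dd zs ρ z j) ^ 2 / (dd zs ρ z i * dd zs ρ z j) := by
      refine Finset.sum_nonneg fun i _ => Finset.sum_nonneg fun j _ => ?_
      exact div_nonneg (mul_nonneg (mul_nonneg (ha i).le (ha j).le) (sq_nonneg _))
        (mul_nonneg (hd0 i).le (hd0 j).le)
    have hb : ∑ i : Fin r, ∑ j : Fin r,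
        a i * a j * (dd zs ρ z i - dd zs ρ z j) ^ 2 / (dd zs ρ z i * dd zs ρ z j)
        ≤ 4 * M ^ 2 / u ^ 2 := by
      have hb' : ∑ i : Fin r, ∑ j : Fin r,
          a i * a j * (dd zs ρ z i - dd zs ρ z j) ^ 2 / (dd zs ρ z i * dd zs ρ z j)
          ≤ ∑ i : Fin r, ∑ j : Fin r, a i * a j * (4 * M ^ 2 / u ^ 2) := by
        refine Finset.sum_le_sum fun i _ => Finset.sum_le_sum fun j _ => ?_
        rw [mul_div_assoc]
        refine mul_le_mul_of_nonneg_left ?_ (mul_nonneg (ha i).le (ha j).le)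
        exact div_le_div₀ (by positivity) (hdd i j) (by positivity) (hden1 i j)
      rwa [const_double_sum a hsum] at hb'
    have h42 : (4:ℝ) * M ^ 2 / u ^ 2 = 2 * (2 * M ^ 2 / u ^ 2) := by ring
    constructor
    · linarith [hid, hnn]
    · linarith [hid, hb, h42]
  -- unit vectors
  set x : Fin r → ℝ := fun i => (z - zs i) / dd zs ρ z i with hxdef
  set y : Fin r → ℝ := fun i => ρ / dd zs ρ z i with hydef
  have hxy : ∀ i, x i ^ 2 + y i ^ 2 = 1 := by
    intro i
    simp only [hxdef, hydef]
    exact unit_xy ρ (z - zs i) (dd zs ρ z i) (hd0 i) (by rw [hdsq i])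
  have hXx : X = ∑ i, a i * x i := Finset.sum_congr rfl fun i _ => mul_div_assoc _ _ _
  have hYy : Y = ∑ i, a i * y i := Finset.sum_congr rfl fun i _ => mul_div_assoc _ _ _
  -- pointwise bounds on differences of unit vectors
  have hy2 : ∀ i j, (y i - y j) ^ 2 ≤ 16 * M ^ 2 / u ^ 2 := by
    intro i j
    have h1 := (hd0 i).ne'
    have h2 := (hd0 j).ne'
    have heq : y i - y j = ρ * (dd zs ρ z j - dd zs ρ z i) / (dd zs ρ z i * dd zs ρ z j) := by
      simp only [hydef]; field_simp
    rw [heq, div_pow]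
    have hρsq : ρ ^ 2 ≤ (2 * u) ^ 2 := pow_le_pow_left₀ hρ.le hρ2u 2
    have hnum : (ρ * (dd zs ρ z j - dd zs ρ z i)) ^ 2 ≤ 16 * M ^ 2 * (u ^ 2 * u ^ 2) / u ^ 2 := by
      calc (ρ * (dd zs ρ z j - dd zs ρ z i)) ^ 2
          = ρ ^ 2 * (dd zs ρ z j - dd zs ρ z i) ^ 2 := by ring
        _ ≤ (2 * u) ^ 2 * (4 * M ^ 2) :=
            mul_le_mul hρsq (hdd j i) (sq_nonneg _) (by positivity)
        _ = 16 * M ^ 2 * (u ^ 2 * u ^ 2) / u ^ 2 := by field_simp; ring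
    calc (ρ * (dd zs ρ z j - dd zs ρ z i)) ^ 2 / (dd zs ρ z i * dd zs ρ z j) ^ 2
        ≤ (16 * M ^ 2 * (u ^ 2 * u ^ 2) / u ^ 2) / (u ^ 2 * u ^ 2) :=
          div_le_div₀ (by positivity) hnum (by positivity) (hden i j)
      _ = 16 * M ^ 2 / u ^ 2 := by field_simp
  have hx2 : ∀ i j, (x i - x j) ^ 2 ≤ 64 * M ^ 2 / u ^ 2 := by
    intro i j
    have h1 := (hd0 i).ne'
    have h2 := (hd0 j).ne'
    have heq : x i - x j = ((z - zs i) * (dd zs ρ z j - dd zs ρ z i)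
        + (zs j - zs i) * dd zs ρ z i) / (dd zs ρ z i * dd zs ρ z j) := by
      simp only [hxdef]; field_simp; ring
    rw [heq, div_pow]
    have hzzi : (z - zs i) ^ 2 ≤ (2 * u) ^ 2 := by
      have h3 : (z - zs i) ^ 2 ≤ (dd zs ρ z i) ^ 2 := by
        rw [hdsq i]; linarith [sq_nonneg ρ]
      have h4 : (dd zs ρ z i) ^ 2 ≤ (2 * u) ^ 2 := pow_le_pow_left₀ (hd0 i).le (hd2u i) 2
      linarith
    have hzij : (zs j - zs i) ^ 2 ≤ 4 * M ^ 2 := by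
      have hi := abs_le.mp (hMi i)
      have hj := abs_le.mp (hMi j)
      calc (zs j - zs i) ^ 2 ≤ (2 * M) ^ 2 :=
            sq_le_sq' (by linarith [hi.2, hj.1]) (by linarith [hi.1, hj.2])
        _ = 4 * M ^ 2 := by ring
    have ht1 : ((z - zs i) * (dd zs ρ z j - dd zs ρ z i)) ^ 2 ≤ 16 * M ^ 2 * u ^ 2 := by
      calc ((z - zs i) * (dd zs ρ z j - dd zs ρ z i)) ^ 2
          = (z - zs i) ^ 2 * (dd zs ρ z j - dd zs ρ z i) ^ 2 := by ring
        _ ≤ (2 * u) ^ 2 * (4 * M ^ 2) := mul_le_mul hzzi (hdd j i) (sq_nonneg _) (by positivity)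
        _ = 16 * M ^ 2 * u ^ 2 := by ring
    have ht2' : ((zs j - zs i) * dd zs ρ z i) ^ 2 ≤ 16 * M ^ 2 * u ^ 2 := by
      have h4 : (dd zs ρ z i) ^ 2 ≤ (2 * u) ^ 2 := pow_le_pow_left₀ (hd0 i).le (hd2u i) 2
      calc ((zs j - zs i) * dd zs ρ z i) ^ 2
          = (zs j - zs i) ^ 2 * (dd zs ρ z i) ^ 2 := by ring
        _ ≤ (4 * M ^ 2) * ((2 * u) ^ 2) := mul_le_mul hzij h4 (sq_nonneg _) (by positivity)
        _ = 16 * M ^ 2 * u ^ 2 := by ring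
    have hnum : ((z - zs i) * (dd zs ρ z j - dd zs ρ z i) + (zs j - zs i) * dd zs ρ z i) ^ 2
        ≤ 64 * M ^ 2 * (u ^ 2 * u ^ 2) / u ^ 2 := by
      have h5 := sq_add_le_of_sq_le (by positivity) ht1 ht2'
      calc ((z - zs i) * (dd zs ρ z j - dd zs ρ z i) + (zs j - zs i) * dd zs ρ z i) ^ 2
          ≤ 4 * (16 * M ^ 2 * u ^ 2) := h5
        _ = 64 * M ^ 2 * (u ^ 2 * u ^ 2) / u ^ 2 := by field_simp; ring
    calc ((z - zs i) * (dd zs ρ z j - dd zs ρ z i) + (zs j - zs i) * dd zs ρ z i) ^ 2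
          / (dd zs ρ z i * dd zs ρ z j) ^ 2
        ≤ (64 * M ^ 2 * (u ^ 2 * u ^ 2) / u ^ 2) / (u ^ 2 * u ^ 2) :=
          div_le_div₀ (by positivity) hnum (by positivity) (hden i j)
      _ = 64 * M ^ 2 / u ^ 2 := by field_simp
  -- bound on e₂ = 1 - D
  have he2 : 0 ≤ 1 - D ∧ 1 - D ≤ 40 * M ^ 2 / u ^ 2 := by
    have hid := double_sum_D a x y hxy
    rw [hsum, one_pow, ← hXx, ← hYy, ← hDdef] at hid
    have hnn : (0:ℝ) ≤ ∑ i : Fin r, ∑ j : Fin r,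
        a i * a j * ((x i - x j) ^ 2 + (y i - y j) ^ 2) := by
      refine Finset.sum_nonneg fun i _ => Finset.sum_nonneg fun j _ => ?_
      exact mul_nonneg (mul_nonneg (ha i).le (ha j).le) (by positivity)
    have hb : ∑ i : Fin r, ∑ j : Fin r, a i * a j * ((x i - x j) ^ 2 + (y i - y j) ^ 2)
        ≤ 80 * M ^ 2 / u ^ 2 := by
      have hb' : ∑ i : Fin r, ∑ j : Fin r, a i * a j * ((x i - x j) ^ 2 + (y i - y j) ^ 2)
          ≤ ∑ i : Fin r, ∑ j : Fin r, a i * a j * (80 * M ^ 2 / u ^ 2) := by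
        refine Finset.sum_le_sum fun i _ => Finset.sum_le_sum fun j _ => ?_
        refine mul_le_mul_of_nonneg_left ?_ (mul_nonneg (ha i).le (ha j).le)
        have hx' := hx2 i j
        have hy' := hy2 i j
        rw [show (80 : ℝ) * M ^ 2 / u ^ 2 = 64 * M ^ 2 / u ^ 2 + 16 * M ^ 2 / u ^ 2 by ring]
        linarith
      rwa [const_double_sum a hsum] at hb'
    have h42 : (80:ℝ) * M ^ 2 / u ^ 2 = 2 * (40 * M ^ 2 / u ^ 2) := by ring
    constructor
    · linarith [hid, hnn]
    · linarith [hid, hb, h42]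
  -- D is close to 1
  have hDle : D ≤ 1 := by linarith [he2.1]
  have hD2 : (1 : ℝ) / 2 ≤ D := by
    have h100 : 100 * M ^ 2 ≤ u ^ 2 := by
      calc 100 * M ^ 2 = (10 * M) ^ 2 := by ring
        _ ≤ u ^ 2 := pow_le_pow_left₀ (by positivity) huM 2
    have h40 : 40 * M ^ 2 / u ^ 2 ≤ 1 / 2 := by
      rw [div_le_div_iff₀ (by positivity) (by norm_num)]
      linarith [sq_nonneg M]
    linarith [he2.2]
  have hD0 : 0 < D := by linarith
  -- the numerator
  set e₁ := P * S - 1 with he₁def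
  set e₂ := 1 - D with he₂def
  set Num := (A + S) * (P * (A + S) - D) - A * D with hNumdef
  have hNum_eq : Num = A * (A * P) + A * e₁ + (A + S) * (e₁ + e₂) + A * e₂ := by
    simp only [hNumdef, he₁def, he₂def]; ring
  have hAS0 : 0 < A + S := by linarith
  have hNum0 : 0 ≤ Num := by
    rw [hNum_eq]
    have t1 : 0 ≤ A * (A * P) := by positivity
    have t2 : 0 ≤ A * e₁ := mul_nonneg hA.le he1.1
    have t3 : 0 ≤ (A + S) * (e₁ + e₂) := mul_nonneg hAS0.le (by linarith [he1.1, he2.1])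
    have t4 : 0 ≤ A * e₂ := mul_nonneg hA.le he2.1
    linarith
  have hNumU : Num * u ≤ C₁ := by
    rw [hNum_eq]
    have hPu' : P * u ≤ 1 := by
      rw [← le_div_iff₀ hu0]; exact hPu
    have hAS3 : A + S ≤ 3 * u := by linarith [hS2, huA, huM, hM0, htu]
    have b1 : A * (A * P) * u ≤ A ^ 2 := by
      calc A * (A * P) * u = A ^ 2 * (P * u) := by ring
        _ ≤ A ^ 2 * 1 := mul_le_mul_of_nonneg_left hPu' (by positivity)
        _ = A ^ 2 := mul_one _
    have hMu2 : 2 * M ^ 2 / u ^ 2 * u ≤ 2 * M ^ 2 := by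
      rw [div_mul_eq_mul_div, div_le_iff₀ (by positivity)]
      linarith [mul_nonneg (mul_nonneg (sq_nonneg M) hu0.le) (sub_nonneg.2 hu1)]
    have b2 : A * e₁ * u ≤ 2 * A * M ^ 2 := by
      have h6 : e₁ * u ≤ 2 * M ^ 2 := by
        calc e₁ * u ≤ (2 * M ^ 2 / u ^ 2) * u := mul_le_mul_of_nonneg_right he1.2 hu0.le
          _ ≤ 2 * M ^ 2 := hMu2
      calc A * e₁ * u = A * (e₁ * u) := by ring
        _ ≤ A * (2 * M ^ 2) := mul_le_mul_of_nonneg_left h6 hA.le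
        _ = 2 * A * M ^ 2 := by ring
    have b3 : (A + S) * (e₁ + e₂) * u ≤ 126 * M ^ 2 := by
      have he12 : e₁ + e₂ ≤ 42 * M ^ 2 / u ^ 2 := by
        have hsplit : (42:ℝ) * M ^ 2 / u ^ 2 = 2 * M ^ 2 / u ^ 2 + 40 * M ^ 2 / u ^ 2 := by ring
        linarith [he1.2, he2.2, hsplit]
      have he12' : 0 ≤ e₁ + e₂ := by linarith [he1.1, he2.1]
      calc (A + S) * (e₁ + e₂) * u ≤ (3 * u) * (42 * M ^ 2 / u ^ 2) * u := by
            apply mul_le_mul_of_nonneg_right _ hu0.le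
            exact mul_le_mul hAS3 he12 he12' (by positivity)
        _ = 126 * M ^ 2 := by field_simp; ring
    have hMu4 : 40 * M ^ 2 / u ^ 2 * u ≤ 40 * M ^ 2 := by
      rw [div_mul_eq_mul_div, div_le_iff₀ (by positivity)]
      linarith [mul_nonneg (mul_nonneg (sq_nonneg M) hu0.le) (sub_nonneg.2 hu1)]
    have b4 : A * e₂ * u ≤ 40 * A * M ^ 2 := by
      have h6 : e₂ * u ≤ 40 * M ^ 2 := by
        calc e₂ * u ≤ (40 * M ^ 2 / u ^ 2) * u := mul_le_mul_of_nonneg_right he2.2 hu0.le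
          _ ≤ 40 * M ^ 2 := hMu4
      calc A * e₂ * u = A * (e₂ * u) := by ring
        _ ≤ A * (40 * M ^ 2) := mul_le_mul_of_nonneg_left h6 hA.le
        _ = 40 * A * M ^ 2 := by ring
    have expand : (A * (A * P) + A * e₁ + (A + S) * (e₁ + e₂) + A * e₂) * u
        = A * (A * P) * u + A * e₁ * u + (A + S) * (e₁ + e₂) * u + A * e₂ * u := by ring
    rw [expand, hC₁def]
    linarith
  -- conclude
  have hVsub : Vfun A a zs ρ z - 1 = Num / (A * D) := by
    rw [hVeq, hNumdef]
    field_simp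
    try ring
  rw [hVsub, abs_of_nonneg (div_nonneg hNum0 (by positivity))]
  rw [div_lt_iff₀ (by positivity)]
  have h2C : 2 * C₁ < u * (A * ε) := by
    rw [div_lt_iff₀ (by positivity)] at huC
    exact huC
  exact final_step hA hε hu0 hNum0 hNumU h2C hD2
end

section
/- Under the Chen–Teo parameter hypotheses, F_1 − F_0 ≠ 0 and F_2 − F_3 ≠ 0, and the cross-ratio of the boundary values equals the normalized total NUT-charge: ( (F_3 − F_0)·(F_1 − F_2) ) / ( (F_1 − F_0)·(F_2 − F_3) ) = n, where n = (p+q)·(p+q − a·q·(1−p) − b·p·(1−q)) / (a·b·p·q·(1−p)·(1−q)). -/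
theorem statement13 (p q a b f₂ A F₀ F₁ F₂ F₃ : ℝ)
    (hp : -1 < p) (hp1 : p < 1) (hq : -1 < q) (hq1 : q < 1)
    (hpq : 0 < p + q) (hpq0 : p * q ≠ 0)
    (ha : 0 < a) (hb : 0 < b) (hf₂ : 0 < f₂) (hA : 0 < A)
    (h10 : F₁ - F₀ = -(f₂ ^ 2 / A) * (a * (1 - p) / p))
    (h21 : F₂ - F₁ = (f₂ ^ 2 / A) * ((p + q) / (p * q)))
    (h32 : F₃ - F₂ = -(f₂ ^ 2 / A) * (b * (1 - q) / q)) :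
    F₁ - F₀ ≠ 0 ∧ F₂ - F₃ ≠ 0 ∧
      (F₃ - F₀) * (F₁ - F₂) / ((F₁ - F₀) * (F₂ - F₃)) =
        (p + q) * (p + q - a * q * (1 - p) - b * p * (1 - q)) /
          (a * b * p * q * (1 - p) * (1 - q)) := by
  have hp0 : p ≠ 0 := fun h => hpq0 (by rw [h]; ring)
  have hq0 : q ≠ 0 := fun h => hpq0 (by rw [h]; ring)
  have h1p : (1 : ℝ) - p ≠ 0 := by nlinarith
  have h1q : (1 : ℝ) - q ≠ 0 := by nlinarith
  have hc : f₂ ^ 2 / A ≠ 0 := by positivity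
  have h1 : F₁ - F₀ ≠ 0 := by
    rw [h10]
    exact mul_ne_zero (neg_ne_zero.mpr hc)
      (div_ne_zero (mul_ne_zero ha.ne' h1p) hp0)
  have h2 : F₂ - F₃ ≠ 0 := by
    have : F₂ - F₃ = (f₂ ^ 2 / A) * (b * (1 - q) / q) := by linarith [h32]
    rw [this]
    exact mul_ne_zero hc (div_ne_zero (mul_ne_zero hb.ne' h1q) hq0)
  refine ⟨h1, h2, ?_⟩
  have hF30 : F₃ - F₀ = (F₃ - F₂) + (F₂ - F₁) + (F₁ - F₀) := by ring
  have hF12 : F₁ - F₂ = -(F₂ - F₁) := by ring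
  have hF23 : F₂ - F₃ = -(F₃ - F₂) := by ring
  rw [hF30, hF12, hF23, h10, h21, h32]
  have hA0 : A ≠ 0 := hA.ne'
  have hf0 : f₂ ≠ 0 := hf₂.ne'
  field_simp
  ring
end

section
/- (Necessity of integrality of the NUT-charge.) Assume the Chen–Teo parameter hypotheses, and suppose there exist positive real numbers α_0, α_1, α_2, α_3, integers ℓ_1, ℓ_2, and signs ε_1, ε_2 ∈ {1, −1} satisfying the regularity system: ℓ_1·p·α_1 + ε_1·q·α_2 = α_0; p·α_1 + ℓ_2·q·α_2 = ε_2·α_3; ℓ_1·p·α_1·F_1 + ε_1·q·α_2·F_2 = α_0·F_0; and p·α_1·F_1 + ℓ_2·q·α_2·F_2 = ε_2·α_3·F_3. Then necessarily ε_1 = ε_2 = 1, α_1 = (b·(1−q)/(p+q))·α_3, α_2 = (a·(1−p)/(p+q))·α_0, and the normalized total NUT-charge satisfies n = ℓ_1·ℓ_2 − 1; in particular n is an integer. -/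
/-!
Subtracting `F₁` times the first (resp. `F₂` times the second) regularity equation from the third
(resp. fourth) leaves only the differences `F_{i+1} - F_i`, which the parameters fix; so `ε₁α₂` and
`α₁` are `a(1-p)/(p+q) · α₀` and `ε₂ b(1-q)/(p+q) · α₃`. Positivity of the `α`'s forces both
signs to be `+1`.
Substituting back into the first two equations gives `ℓ₁ · bp(1-q) · α₃ = (p+q - aq(1-p)) · α₀` and
`ℓ₂ · aq(1-p) · α₀ = (p+q - bp(1-q)) · α₃`; multiplying them and cancelling `α₀α₃` yields
`ℓ₁ℓ₂ XY = (p+q-X)(p+q-Y)` with `X = aq(1-p)`, `Y = bp(1-q)`, which is `n = ℓ₁ℓ₂ - 1`.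
-/

section

variable {K : Type*} [Field K]

theorem mul_eq_mul_of_barycenter {c u v k s x β β₀ G₀ G₁ G₂ : K}
    (hc : c ≠ 0) (hu : u ≠ 0) (hv : v ≠ 0)
    (h₀ : G₁ - G₀ = -c * (k / u)) (h₂ : G₂ - G₁ = c * (s / (u * v)))
    (e : x + v * β = β₀) (e' : x * G₁ + v * β * G₂ = β₀ * G₀) :
    β * s = β₀ * k := by
  have key : v * β * (G₂ - G₁) = β₀ * (G₀ - G₁) := by linear_combination e' - G₁ * e
  rw [h₂, show G₀ - G₁ = c * (k / u) by linear_combination -h₀] at key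
  field_simp at key
  exact key

theorem mul_mul_eq_sub_mul_sub {p q s X Y m₁ m₂ α₀ α₁ α₂ α₃ : K}
    (h₀ : α₀ ≠ 0) (h₃ : α₃ ≠ 0) (hL : α₂ * s = α₀ * X) (hR : α₁ * s = α₃ * Y)
    (e₁ : m₁ * p * α₁ + q * α₂ = α₀) (e₂ : p * α₁ + m₂ * q * α₂ = α₃) :
    m₁ * m₂ * (q * X * (p * Y)) = (s - q * X) * (s - p * Y) := by
  have k₁ : m₁ * (p * Y) * α₃ = (s - q * X) * α₀ := by
    linear_combination s * e₁ - m₁ * p * hR - q * hL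
  have k₂ : m₂ * (q * X) * α₀ = (s - p * Y) * α₃ := by
    linear_combination s * e₂ - p * hR - m₂ * q * hL
  refine mul_right_cancel₀ (mul_ne_zero h₀ h₃) ?_
  linear_combination m₂ * (q * X) * α₀ * k₁ + (s - q * X) * α₀ * k₂

end

theorem eq_one_of_mul_eq_of_pos {R : Type*} [Field R] [LinearOrder R] [IsStrictOrderedRing R]
    {ε x y : R} (hε : ε = 1 ∨ ε = -1) (hx : 0 < x) (hy : 0 < y) (h : ε * x = y) : ε = 1 := by
  rcases hε with rfl | rfl
  · rfl
  · linarith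

theorem statement15_general (p q a b f₂ A F₀ F₁ F₂ F₃ : ℝ)
    (hp1 : p < 1) (hq1 : q < 1)
    (hpq : 0 < p + q) (hpq0 : p * q ≠ 0)
    (ha : 0 < a) (hb : 0 < b) (hf₂ : 0 < f₂) (hA : 0 < A)
    (h10 : F₁ - F₀ = -(f₂ ^ 2 / A) * (a * (1 - p) / p))
    (h21 : F₂ - F₁ = (f₂ ^ 2 / A) * ((p + q) / (p * q)))
    (h32 : F₃ - F₂ = -(f₂ ^ 2 / A) * (b * (1 - q) / q))
    (α₀ α₁ α₂ α₃ : ℝ)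
    (hα₀ : 0 < α₀) (hα₁ : 0 < α₁) (hα₂ : 0 < α₂) (hα₃ : 0 < α₃)
    (ℓ₁ ℓ₂ : ℤ) (ε₁ ε₂ : ℝ)
    (hε₁ : ε₁ = 1 ∨ ε₁ = -1) (hε₂ : ε₂ = 1 ∨ ε₂ = -1)
    (e1 : (ℓ₁ : ℝ) * p * α₁ + ε₁ * q * α₂ = α₀)
    (e2 : p * α₁ + (ℓ₂ : ℝ) * q * α₂ = ε₂ * α₃)
    (e3 : (ℓ₁ : ℝ) * p * α₁ * F₁ + ε₁ * q * α₂ * F₂ = α₀ * F₀)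
    (e4 : p * α₁ * F₁ + (ℓ₂ : ℝ) * q * α₂ * F₂ = ε₂ * α₃ * F₃) :
    ε₁ = 1 ∧ ε₂ = 1 ∧
      α₁ = (b * (1 - q) / (p + q)) * α₃ ∧
      α₂ = (a * (1 - p) / (p + q)) * α₀ ∧
      (p + q) * (p + q - a * q * (1 - p) - b * p * (1 - q)) /
          (a * b * p * q * (1 - p) * (1 - q)) = (ℓ₁ : ℝ) * (ℓ₂ : ℝ) - 1 := by
  obtain ⟨hp0, hq0⟩ := mul_ne_zero_iff.1 hpq0
  have hc : f₂ ^ 2 / A ≠ 0 := by positivity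
  have h1p : 0 < 1 - p := sub_pos.2 hp1
  have h1q : 0 < 1 - q := sub_pos.2 hq1
  have hL : ε₁ * α₂ * (p + q) = α₀ * (a * (1 - p)) :=
    mul_eq_mul_of_barycenter (x := ℓ₁ * p * α₁) (β := ε₁ * α₂) hc hp0 hq0 h10 h21
      (by linear_combination e1) (by linear_combination e3)
  have hR : α₁ * (p + q) = ε₂ * α₃ * (b * (1 - q)) :=
    mul_eq_mul_of_barycenter (x := ℓ₂ * q * α₂) (G₀ := F₃) (G₁ := F₂) (G₂ := F₁)
      (neg_ne_zero.2 hc) hq0 hp0 (by linear_combination -h32)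
      (by linear_combination -h21) (by linear_combination e2) (by linear_combination e4)
  obtain rfl : ε₁ = 1 := eq_one_of_mul_eq_of_pos hε₁ (mul_pos hα₂ hpq)
    (mul_pos hα₀ (mul_pos ha h1p)) (by linear_combination hL)
  obtain rfl : ε₂ = 1 := eq_one_of_mul_eq_of_pos hε₂ (mul_pos hα₃ (mul_pos hb h1q))
    (mul_pos hα₁ hpq) (by linear_combination -hR)
  have hprod : (ℓ₁ : ℝ) * ℓ₂ * (q * (a * (1 - p)) * (p * (b * (1 - q))))
      = (p + q - q * (a * (1 - p))) * (p + q - p * (b * (1 - q))) :=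
    mul_mul_eq_sub_mul_sub (α₁ := α₁) (α₂ := α₂) hα₀.ne' hα₃.ne' (by linear_combination hL)
      (by linear_combination hR) (by linear_combination e1) (by linear_combination e2)
  have hden : a * b * p * q * (1 - p) * (1 - q) ≠ 0 := by
    simp [ha.ne', hb.ne', hp0, hq0, h1p.ne', h1q.ne']
  refine ⟨rfl, rfl, ?_, ?_, ?_⟩
  · field_simp
    linear_combination hR
  · field_simp
    linear_combination hL
  · rw [div_eq_iff hden]
    linear_combination -hprod

theorem statement15 (p q a b f₂ A F₀ F₁ F₂ F₃ : ℝ)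
    (hp : -1 < p) (hp1 : p < 1) (hq : -1 < q) (hq1 : q < 1)
    (hpq : 0 < p + q) (hpq0 : p * q ≠ 0)
    (ha : 0 < a) (hb : 0 < b) (hf₂ : 0 < f₂) (hA : 0 < A)
    (h10 : F₁ - F₀ = -(f₂ ^ 2 / A) * (a * (1 - p) / p))
    (h21 : F₂ - F₁ = (f₂ ^ 2 / A) * ((p + q) / (p * q)))
    (h32 : F₃ - F₂ = -(f₂ ^ 2 / A) * (b * (1 - q) / q))
    (α₀ α₁ α₂ α₃ : ℝ)
    (hα₀ : 0 < α₀) (hα₁ : 0 < α₁) (hα₂ : 0 < α₂) (hα₃ : 0 < α₃)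
    (ℓ₁ ℓ₂ : ℤ) (ε₁ ε₂ : ℝ)
    (hε₁ : ε₁ = 1 ∨ ε₁ = -1) (hε₂ : ε₂ = 1 ∨ ε₂ = -1)
    (e1 : (ℓ₁ : ℝ) * p * α₁ + ε₁ * q * α₂ = α₀)
    (e2 : p * α₁ + (ℓ₂ : ℝ) * q * α₂ = ε₂ * α₃)
    (e3 : (ℓ₁ : ℝ) * p * α₁ * F₁ + ε₁ * q * α₂ * F₂ = α₀ * F₀)
    (e4 : p * α₁ * F₁ + (ℓ₂ : ℝ) * q * α₂ * F₂ = ε₂ * α₃ * F₃) :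
    ε₁ = 1 ∧ ε₂ = 1 ∧
      α₁ = (b * (1 - q) / (p + q)) * α₃ ∧
      α₂ = (a * (1 - p) / (p + q)) * α₀ ∧
      (p + q) * (p + q - a * q * (1 - p) - b * p * (1 - q)) /
          (a * b * p * q * (1 - p) * (1 - q)) = (ℓ₁ : ℝ) * (ℓ₂ : ℝ) - 1 :=
  statement15_general p q a b f₂ A F₀ F₁ F₂ F₃ hp1 hq1 hpq hpq0 ha hb hf₂ hA h10 h21 h32 α₀ α₁ α₂ α₃
    hα₀ hα₁ hα₂ hα₃ ℓ₁ ℓ₂ ε₁ ε₂ hε₁ hε₂ e1 e2 e3 e4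
end

section
/- (Sufficiency: Theorem 3.1(1), 'if' direction.) Let p, q be real numbers with −1 < p < 1, −1 < q < 1, p + q > 0 and pq ≠ 0, and let a, b be positive real numbers. Suppose the normalized total NUT-charge n = (p+q)·(p+q − a·q·(1−p) − b·p·(1−q)) / (a·b·p·q·(1−p)·(1−q)) is an integer. Then there exist positive real numbers α_0, α_1, α_2, α_3 and integers ℓ_1, ℓ_2 with ℓ_1·ℓ_2 = n + 1 satisfying the four regularity relations: ℓ_1·p·α_1 + q·α_2 = α_0; p·α_1 + ℓ_2·q·α_2 = α_3; −ℓ_1·a·p·(1−p)·α_1 + (p + q − a·q·(1−p))·α_2 = 0; and (p + q − b·p·(1−q))·α_1 − ℓ_2·b·q·(1−q)·α_2 = 0. -/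
/-!
Write `S₁ = p + q - a q (1 - p)`, `S₂ = p + q - b p (1 - q)`, `u = a p (1 - p)` and
`v = b q (1 - q)`. Expanding shows `S₁ S₂ = (n + 1) u v`, so the two homogeneous relations
`ℓ₁ u α₁ = S₁ α₂` and `S₂ α₁ = ℓ₂ v α₂` have a positive solution as soon as `n + 1 = ℓ₁ ℓ₂` is
split into integer factors whose signs match those of `S₁ / u` and `S₂ / v`; flipping the sign of
both factors always achieves this. The remaining two relations define `α₀` and `α₃`, and they are
positive because `a (1 - p) α₀ = (p + q) α₂` and `b (1 - q) α₃ = (p + q) α₁`.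
-/

noncomputable def nutCharge (p q a b : ℝ) : ℝ :=
  (p + q) * (p + q - a * q * (1 - p) - b * p * (1 - q)) / (a * b * p * q * (1 - p) * (1 - q))

theorem mul_eq_nutCharge_add_one_mul {p q a b : ℝ}
    (h : a * b * p * q * (1 - p) * (1 - q) ≠ 0) :
    (p + q - a * q * (1 - p)) * (p + q - b * p * (1 - q)) =
      (nutCharge p q a b + 1) * (a * p * (1 - p) * (b * q * (1 - q))) := by
  rw [nutCharge, div_add_one h, div_mul_eq_mul_div, eq_div_iff h]
  ring

theorem Int.exists_mul_eq_and_pos_mul (k : ℤ) {x : ℝ} (hx : x ≠ 0) :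
    ∃ ℓ₁ ℓ₂ : ℤ, ℓ₁ * ℓ₂ = k ∧ 0 < ℓ₁ * x := by
  have exists_sign : ∀ y : ℝ, y ≠ 0 → ∃ ε : ℤ, ε * ε = 1 ∧ 0 < ε * y := by
    intro y hy
    rcases hy.lt_or_gt with hneg | hpos
    · exact ⟨-1, by norm_num, by push_cast; linarith⟩
    · exact ⟨1, by norm_num, by push_cast; linarith⟩
  rcases eq_or_ne k 0 with rfl | hk
  · obtain ⟨ε, -, hε⟩ := exists_sign x hx
    exact ⟨ε, 0, mul_zero ε, hε⟩
  · obtain ⟨ε, hεε, hε⟩ := exists_sign (k * x) (mul_ne_zero (Int.cast_ne_zero.mpr hk) hx)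
    refine ⟨ε * k, ε, ?_, ?_⟩
    · linear_combination k * hεε
    · push_cast
      linarith

theorem exists_int_factorization_of_mul_eq {S₁ S₂ u v : ℝ} {k : ℤ} (hu : u ≠ 0) (hv : v ≠ 0)
    (h : S₁ * S₂ = k * (u * v)) :
    ∃ (ℓ₁ ℓ₂ : ℤ) (r : ℝ), 0 < r ∧ ℓ₁ * ℓ₂ = k ∧ ℓ₁ * u = S₁ * r ∧ S₂ = ℓ₂ * v * r := by
  by_cases hS₁ : S₁ = 0
  · by_cases hS₂ : S₂ = 0
    · have hk : (k : ℝ) = 0 := by simpa [hS₁, hu, hv] using h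
      exact ⟨0, 0, 1, one_pos, by exact_mod_cast hk.symm, by simp [hS₁], by simp [hS₂]⟩
    · obtain ⟨ℓ₂, ℓ₁, hℓ, hpos⟩ := Int.exists_mul_eq_and_pos_mul k (div_ne_zero hv hS₂)
      have hℓ₂ : (ℓ₂ : ℝ) ≠ 0 := by rintro h₀; simp [h₀] at hpos
      refine ⟨ℓ₁, ℓ₂, S₂ / (ℓ₂ * v), ?_, by rw [mul_comm, hℓ], ?_, by field_simp⟩
      · have hr : S₂ / (ℓ₂ * v) = (ℓ₂ * (v / S₂))⁻¹ := by field_simp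
        exact hr ▸ inv_pos.mpr hpos
      · have hk : ((ℓ₂ * ℓ₁ : ℤ) : ℝ) = 0 := by simpa [hℓ, hS₁, hu, hv] using h
        push_cast at hk
        simp [hS₁, (mul_eq_zero.mp hk).resolve_left hℓ₂]
  · obtain ⟨ℓ₁, ℓ₂, hℓ, hpos⟩ := Int.exists_mul_eq_and_pos_mul k (div_ne_zero hu hS₁)
    refine ⟨ℓ₁, ℓ₂, ℓ₁ * u / S₁, by rwa [mul_div_assoc], hℓ, by field_simp, ?_⟩
    rw [← hℓ] at h
    push_cast at h
    rw [mul_div_assoc', eq_div_iff hS₁]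
    linear_combination h

theorem exists_regular_of_factorization {p q a b : ℝ} (hp : p < 1) (hq : q < 1)
    (hpq : 0 < p + q) (ha : 0 < a) (hb : 0 < b) {ℓ₁ ℓ₂ : ℤ} {r : ℝ} (hr : 0 < r)
    (h₁ : (ℓ₁ : ℝ) * (a * p * (1 - p)) = (p + q - a * q * (1 - p)) * r)
    (h₂ : p + q - b * p * (1 - q) = (ℓ₂ : ℝ) * (b * q * (1 - q)) * r) :
    ∃ α₀ α₁ α₂ α₃ : ℝ, 0 < α₀ ∧ 0 < α₁ ∧ 0 < α₂ ∧ 0 < α₃ ∧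
      (ℓ₁ : ℝ) * p * α₁ + q * α₂ = α₀ ∧
      p * α₁ + (ℓ₂ : ℝ) * q * α₂ = α₃ ∧
      -(ℓ₁ : ℝ) * a * p * (1 - p) * α₁ + (p + q - a * q * (1 - p)) * α₂ = 0 ∧
      (p + q - b * p * (1 - q)) * α₁ - (ℓ₂ : ℝ) * b * q * (1 - q) * α₂ = 0 := by
  have hp' : 0 < 1 - p := by linarith
  have hq' : 0 < 1 - q := by linarith
  refine ⟨(p + q) * r / (a * (1 - p)), 1, r, (p + q) / (b * (1 - q)),
    by positivity, one_pos, hr, by positivity, ?_, ?_, by linear_combination -h₁,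
    by linear_combination h₂⟩
  · rw [eq_div_iff (by positivity)]
    linear_combination h₁
  · rw [eq_div_iff (by positivity)]
    linear_combination -h₂

theorem statement16_general (p q a b : ℝ)
    (hp1 : p < 1) (hq1 : q < 1)
    (hpq : 0 < p + q) (hpq0 : p * q ≠ 0)
    (ha : 0 < a) (hb : 0 < b)
    (hn : ∃ m : ℤ, (p + q) * (p + q - a * q * (1 - p) - b * p * (1 - q)) /
      (a * b * p * q * (1 - p) * (1 - q)) = (m : ℝ)) :
    ∃ (α₀ α₁ α₂ α₃ : ℝ) (ℓ₁ ℓ₂ : ℤ),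
      0 < α₀ ∧ 0 < α₁ ∧ 0 < α₂ ∧ 0 < α₃ ∧
      (ℓ₁ : ℝ) * (ℓ₂ : ℝ) =
        (p + q) * (p + q - a * q * (1 - p) - b * p * (1 - q)) /
          (a * b * p * q * (1 - p) * (1 - q)) + 1 ∧
      (ℓ₁ : ℝ) * p * α₁ + q * α₂ = α₀ ∧
      p * α₁ + (ℓ₂ : ℝ) * q * α₂ = α₃ ∧
      -(ℓ₁ : ℝ) * a * p * (1 - p) * α₁ + (p + q - a * q * (1 - p)) * α₂ = 0 ∧
      (p + q - b * p * (1 - q)) * α₁ - (ℓ₂ : ℝ) * b * q * (1 - q) * α₂ = 0 := by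
  obtain ⟨m, hm⟩ := hn
  obtain ⟨hp0, hq0⟩ := mul_ne_zero_iff.mp hpq0
  have hp' : 1 - p ≠ 0 := by linarith
  have hq' : 1 - q ≠ 0 := by linarith
  have hu : a * p * (1 - p) ≠ 0 := by positivity
  have hv : b * q * (1 - q) ≠ 0 := by positivity
  have hS : (p + q - a * q * (1 - p)) * (p + q - b * p * (1 - q)) =
      ((m + 1 : ℤ) : ℝ) * (a * p * (1 - p) * (b * q * (1 - q))) := by
    rw [mul_eq_nutCharge_add_one_mul (by positivity), nutCharge, hm]
    push_cast
    rfl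
  obtain ⟨ℓ₁, ℓ₂, r, hr, hℓ, h₁, h₂⟩ := exists_int_factorization_of_mul_eq hu hv hS
  obtain ⟨α₀, α₁, α₂, α₃, h₀pos, h₁pos, h₂pos, h₃pos, hrel⟩ :=
    exists_regular_of_factorization hp1 hq1 hpq ha hb hr h₁ h₂
  refine ⟨α₀, α₁, α₂, α₃, ℓ₁, ℓ₂, h₀pos, h₁pos, h₂pos, h₃pos, ?_, hrel⟩
  rw [hm]
  exact_mod_cast hℓ

theorem statement16 (p q a b : ℝ)
    (hp : -1 < p) (hp1 : p < 1) (hq : -1 < q) (hq1 : q < 1)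
    (hpq : 0 < p + q) (hpq0 : p * q ≠ 0)
    (ha : 0 < a) (hb : 0 < b)
    (hn : ∃ m : ℤ, (p + q) * (p + q - a * q * (1 - p) - b * p * (1 - q)) /
      (a * b * p * q * (1 - p) * (1 - q)) = (m : ℝ)) :
    ∃ (α₀ α₁ α₂ α₃ : ℝ) (ℓ₁ ℓ₂ : ℤ),
      0 < α₀ ∧ 0 < α₁ ∧ 0 < α₂ ∧ 0 < α₃ ∧
      (ℓ₁ : ℝ) * (ℓ₂ : ℝ) =
        (p + q) * (p + q - a * q * (1 - p) - b * p * (1 - q)) /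
          (a * b * p * q * (1 - p) * (1 - q)) + 1 ∧
      (ℓ₁ : ℝ) * p * α₁ + q * α₂ = α₀ ∧
      p * α₁ + (ℓ₂ : ℝ) * q * α₂ = α₃ ∧
      -(ℓ₁ : ℝ) * a * p * (1 - p) * α₁ + (p + q - a * q * (1 - p)) * α₂ = 0 ∧
      (p + q - b * p * (1 - q)) * α₁ - (ℓ₂ : ℝ) * b * q * (1 - q) * α₂ = 0 :=
  statement16_general p q a b hp1 hq1 hpq hpq0 ha hb hn
end

section
/- (Classification of the smooth case: only the Chen–Teo instantons.) Let p, q be real numbers with −1 < p < 1, −1 < q < 1, p + q > 0, and let a, b be positive real numbers satisfying the sign conditions: a > 1 if p > 0, a < 1 if p < 0, a = 1 if p = 0, and similarly b > 1 if q > 0, b < 1 if q < 0, b = 1 if q = 0. Suppose there exist integers ℓ_1, ℓ_2 such that ℓ_1·p + q = 1, p + ℓ_2·q = 1, p + q − a·(1 − p) = 0, and p + q − b·(1 − q) = 0. Then ℓ_1 = ℓ_2 = 1, p + q = 1, 0 < p < 1, 0 < q < 1, a = 1/q, and b = 1/p; in particular the normalized total NUT-charge n = (p+q)·(p+q − a·q·(1−p)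 − b·p·(1−q)) / (a·b·p·q·(1−p)·(1−q)) equals 0. -/
/-! If `q > 0`, then `b > 1` and `p + q = b (1 - q) > 1 - q`; together with `p + ℓ₂ q = 1` this
gives `(2 - ℓ₂) q > 0`, while `ℓ₂ q = 1 - p > 0`, so `ℓ₂ = 1` and `p + q = 1`. Since one of `p`, `q`
is positive, this argument forces `p + q = 1`, so both are positive and both `ℓᵢ = 1`. Then
`a (1 - p) = b (1 - q) = 1` read `a q = b p = 1`, and the numerator of the NUT charge vanishes. -/

lemma int_eq_one_of_add_mul_eq_one {x y c : ℝ} {ℓ : ℤ} (hx : x < 1) (hy : 0 < y) (hy1 : y < 1)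
    (hc : 1 < c) (hxy : x + y = c * (1 - y)) (hℓ : x + ℓ * y = 1) : ℓ = 1 := by
  have hpos : (0 : ℝ) < ℓ := pos_of_mul_pos_left (by linarith : (0 : ℝ) < ℓ * y) hy.le
  have hlt : (ℓ : ℝ) < 2 := by
    have : 1 - y < x + y := by rw [hxy]; nlinarith
    nlinarith
  have hpos' : 0 < ℓ := by exact_mod_cast hpos
  have hlt' : ℓ < 2 := by exact_mod_cast hlt
  omega

theorem statement17_general (p q a b : ℝ)
    (hp1 : p < 1) (hq1 : q < 1)
    (hpq : 0 < p + q)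
    (hap : 0 < p → 1 < a)
    (hbq : 0 < q → 1 < b)
    (ℓ₁ ℓ₂ : ℤ)
    (e1 : (ℓ₁ : ℝ) * p + q = 1) (e2 : p + (ℓ₂ : ℝ) * q = 1)
    (e3 : p + q - a * (1 - p) = 0) (e4 : p + q - b * (1 - q) = 0) :
    ℓ₁ = 1 ∧ ℓ₂ = 1 ∧ p + q = 1 ∧ 0 < p ∧ p < 1 ∧ 0 < q ∧ q < 1 ∧
      a = 1 / q ∧ b = 1 / p ∧
      (p + q) * (p + q - a * q * (1 - p) - b * p * (1 - q)) /
        (a * b * p * q * (1 - p) * (1 - q)) = 0 := by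
  have hℓ₁ (hp0 : 0 < p) : ℓ₁ = 1 :=
    int_eq_one_of_add_mul_eq_one hq1 hp0 hp1 (hap hp0) (by linarith) (by linarith)
  have hq0 : 0 < q := by
    by_contra! hq0
    rw [hℓ₁ (by linarith), Int.cast_one] at e1
    linarith
  have hℓ₂ : ℓ₂ = 1 :=
    int_eq_one_of_add_mul_eq_one hp1 hq0 hq1 (hbq hq0) (by linarith) e2
  have hsum : p + q = 1 := by
    rw [hℓ₂, Int.cast_one] at e2
    linarith
  have hp0 : 0 < p := by linarith
  rw [hsum, show 1 - p = q by linarith] at e3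
  rw [hsum, show 1 - q = p by linarith] at e4
  have haq : a = 1 / q := eq_one_div_of_mul_eq_one_left (by linarith)
  have hbp : b = 1 / p := eq_one_div_of_mul_eq_one_left (by linarith)
  have hnut : p + q - a * q * (1 - p) - b * p * (1 - q) = 0 := by
    rw [haq, hbp, one_div_mul_cancel hq0.ne', one_div_mul_cancel hp0.ne']
    linarith
  exact ⟨hℓ₁ hp0, hℓ₂, hsum, hp0, hp1, hq0, hq1, haq, hbp, by rw [hnut, mul_zero, zero_div]⟩

theorem statement17 (p q a b : ℝ)
    (hp : -1 < p) (hp1 : p < 1) (hq : -1 < q) (hq1 : q < 1)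
    (hpq : 0 < p + q)
    (ha : 0 < a) (hb : 0 < b)
    (hap : 0 < p → 1 < a) (han : p < 0 → a < 1) (ha0 : p = 0 → a = 1)
    (hbq : 0 < q → 1 < b) (hbn : q < 0 → b < 1) (hb0 : q = 0 → b = 1)
    (ℓ₁ ℓ₂ : ℤ)
    (e1 : (ℓ₁ : ℝ) * p + q = 1) (e2 : p + (ℓ₂ : ℝ) * q = 1)
    (e3 : p + q - a * (1 - p) = 0) (e4 : p + q - b * (1 - q) = 0) :
    ℓ₁ = 1 ∧ ℓ₂ = 1 ∧ p + q = 1 ∧ 0 < p ∧ p < 1 ∧ 0 < q ∧ q < 1 ∧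
      a = 1 / q ∧ b = 1 / p ∧
      (p + q) * (p + q - a * q * (1 - p) - b * p * (1 - q)) /
        (a * b * p * q * (1 - p) * (1 - q)) = 0 :=
  statement17_general p q a b hp1 hq1 hpq hap hbq ℓ₁ ℓ₂ e1 e2 e3 e4
end

section
/- (The AF case.) Assume the Chen–Teo parameter hypotheses and suppose the normalized total NUT-charge vanishes: n = 0, i.e., p + q = a·q·(1−p) + b·p·(1−q). Suppose there exist positive real numbers α_0, α_1, α_2, α_3 and integers ℓ_1, ℓ_2 satisfying: ℓ_1·p·α_1 + q·α_2 = α_0; p·α_1 + ℓ_2·q·α_2 = α_3; ℓ_1·p·α_1·F_1 + q·α_2·F_2 = α_0·F_0; and p·α_1·F_1 + ℓ_2·q·α_2·F_2 = α_3·F_3. Then ℓ_1 = ℓ_2 = 1 and α_0 = α_3. -/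
theorem statement18 (p q a b f₂ A F₀ F₁ F₂ F₃ : ℝ)
    (hp : -1 < p) (hp1 : p < 1) (hq : -1 < q) (hq1 : q < 1)
    (hpq : 0 < p + q) (hpq0 : p * q ≠ 0)
    (ha : 0 < a) (hb : 0 < b) (hf₂ : 0 < f₂) (hA : 0 < A)
    (h10 : F₁ - F₀ = -(f₂ ^ 2 / A) * (a * (1 - p) / p))
    (h21 : F₂ - F₁ = (f₂ ^ 2 / A) * ((p + q) / (p * q)))
    (h32 : F₃ - F₂ = -(f₂ ^ 2 / A) * (b * (1 - q) / q))
    -- the AF condition: the normalized total NUT-charge vanishes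
    (hAF : p + q = a * q * (1 - p) + b * p * (1 - q))
    (α₀ α₁ α₂ α₃ : ℝ)
    (hα₀ : 0 < α₀) (hα₁ : 0 < α₁) (hα₂ : 0 < α₂) (hα₃ : 0 < α₃)
    (ℓ₁ ℓ₂ : ℤ)
    (e1 : (ℓ₁ : ℝ) * p * α₁ + q * α₂ = α₀)
    (e2 : p * α₁ + (ℓ₂ : ℝ) * q * α₂ = α₃)
    (e3 : (ℓ₁ : ℝ) * p * α₁ * F₁ + q * α₂ * F₂ = α₀ * F₀)
    (e4 : p * α₁ * F₁ + (ℓ₂ : ℝ) * q * α₂ * F₂ = α₃ * F₃) :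
    ℓ₁ = 1 ∧ ℓ₂ = 1 ∧ α₀ = α₃ := by
  have hp0 : p ≠ 0 := fun h => hpq0 (by rw [h]; ring)
  have hq0 : q ≠ 0 := fun h => hpq0 (by rw [h]; ring)
  set c : ℝ := f₂ ^ 2 / A with hc_def
  have hc : 0 < c := div_pos (pow_pos hf₂ 2) hA
  have h10c : p * (F₁ - F₀) = -(c * (a * (1 - p))) := by
    rw [h10]; field_simp
  have h21c : p * q * (F₂ - F₁) = c * (p + q) := by
    rw [h21]; field_simp
  have h32c : q * (F₃ - F₂) = -(c * (b * (1 - q))) := by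
    rw [h32]; field_simp
  have hcpq : c * p * q ≠ 0 := by
    exact mul_ne_zero (mul_ne_zero (ne_of_gt hc) hp0) hq0
  have E1s : c * p * q * ((ℓ₁ : ℝ) * (a * (1 - p) * α₁)) =
      c * p * q * (b * (1 - q) * α₂) := by
    linear_combination (-(p * q)) * e3 + p * q * F₀ * e1 +
      (ℓ₁ : ℝ) * α₁ * p * q * h10c + α₂ * q * h21c + α₂ * q ^ 2 * h10c +
      c * q * α₂ * hAF
  have E2s : c * p * q * ((ℓ₂ : ℝ) * (b * (1 - q) * α₂)) =
      c * p * q * (a * (1 - p) * α₁) := by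
    linear_combination p * q * e4 - p * q * F₃ * e2 + α₁ * p * h21c +
      α₁ * p ^ 2 * h32c + (ℓ₂ : ℝ) * α₂ * p * q * h32c + α₁ * p * c * hAF
  have E1 : (ℓ₁ : ℝ) * (a * (1 - p) * α₁) = b * (1 - q) * α₂ :=
    mul_left_cancel₀ hcpq E1s
  have E2 : (ℓ₂ : ℝ) * (b * (1 - q) * α₂) = a * (1 - p) * α₁ :=
    mul_left_cancel₀ hcpq E2s
  have h1p : 0 < 1 - p := by linarith
  have h1q : 0 < 1 - q := by linarith
  have hX : 0 < a * (1 - p) * α₁ := by positivity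
  have hY : 0 < b * (1 - q) * α₂ := by positivity
  have hl1pos : 0 < (ℓ₁ : ℝ) := by
    have h : 0 < (ℓ₁ : ℝ) * (a * (1 - p) * α₁) := by rw [E1]; exact hY
    rcases mul_pos_iff.mp h with ⟨h1, _⟩ | ⟨_, h2⟩
    · exact h1
    · linarith
  have hl2pos : 0 < (ℓ₂ : ℝ) := by
    have h : 0 < (ℓ₂ : ℝ) * (b * (1 - q) * α₂) := by rw [E2]; exact hX
    rcases mul_pos_iff.mp h with ⟨h1, _⟩ | ⟨_, h2⟩
    · exact h1
    · linarith
  have hmul : (ℓ₁ : ℝ) * (ℓ₂ : ℝ) = 1 := by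
    have h1 : (ℓ₁ : ℝ) * (ℓ₂ : ℝ) * (b * (1 - q) * α₂) = b * (1 - q) * α₂ := by
      calc (ℓ₁ : ℝ) * (ℓ₂ : ℝ) * (b * (1 - q) * α₂)
          = (ℓ₁ : ℝ) * ((ℓ₂ : ℝ) * (b * (1 - q) * α₂)) := by ring
        _ = (ℓ₁ : ℝ) * (a * (1 - p) * α₁) := by rw [E2]
        _ = b * (1 - q) * α₂ := E1
    have h2 : (ℓ₁ : ℝ) * (ℓ₂ : ℝ) * (b * (1 - q) * α₂) =
        1 * (b * (1 - q) * α₂) := by rw [one_mul]; exact h1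
    exact mul_right_cancel₀ (ne_of_gt hY) h2
  have hmulZ : ℓ₁ * ℓ₂ = 1 := by
    have : ((ℓ₁ * ℓ₂ : ℤ) : ℝ) = ((1 : ℤ) : ℝ) := by push_cast; exact hmul
    exact_mod_cast this
  have hl1posZ : 0 < ℓ₁ := by exact_mod_cast hl1pos
  have hl1 : ℓ₁ = 1 := by
    rcases Int.mul_eq_one_iff_eq_one_or_neg_one.mp hmulZ with ⟨h1, h2⟩ | ⟨h1, h2⟩
    · exact h1
    · omega
  have hl2 : ℓ₂ = 1 := by
    rcases Int.mul_eq_one_iff_eq_one_or_neg_one.mp hmulZ with ⟨h1, h2⟩ | ⟨h1, h2⟩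
    · exact h2
    · omega
  refine ⟨hl1, hl2, ?_⟩
  subst hl1 hl2
  push_cast at e1 e2
  linarith
end
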